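/- arXiv:2410.10025 — 3 statements merged into one kernel-verified Lean document; each statement's English description precedes it below -/
import Mathlib

section
/- Let n, p, q ≥ 1 be integers, Y ∈ ℝ^{n×q}, X ∈ ℝ^{n×p}, B ∈ ℝ^{p×q}, θ ∈ [0,1), and η₁,…,η_q > 0. Let Ω be the inverse of Σ = diag(η_i) [(1−θ)·I_q + θ·1_q 1_qᵀ] diag(η_i). Then tr[(1/n)(Y−XB)ᵀ(Y−XB)·Ω] − log det(Ω) = (1/(n(1−θ)))·‖(Y−XB)·diag(η_i⁻¹)‖_F² − (θ/(n(1−θ)(1−θ+qθ)))·‖(Y−XB)·diag(η_i⁻¹)·1_q‖² + (q−1)·log(1−θ) + log(1+(q−1)θ) + 2·∑_{i=1}^q log(η_i). -/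
/-!
Write `Σ = D C D` with `D = diag(η)` and `C = (1-θ)I + θJ`, `J` the all-ones matrix. Since
`J = 1 1ᵀ` has rank one and `J² = qJ`, the Sherman–Morrison formula gives
`C⁻¹ = (1-θ)⁻¹ (I - θ/(1-θ+qθ) J)` and the matrix determinant lemma gives
`det C = (1-θ)^(q-1) (1+(q-1)θ)`. Cycling the trace moves the two factors `D⁻¹` onto the
residuals, `tr(RᵀR Σ⁻¹) = tr(RsᵀRs C⁻¹)`, and `tr(AᵀA J) = ‖A 1‖²`.
-/

open Matrix

namespace Matrix

variable {ι R : Type*} [Fintype ι]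

omit [Fintype ι] in
lemma of_one_eq_vecMulVec [MulOneClass R] : (of fun _ _ => 1 : Matrix ι ι R) = vecMulVec 1 1 := by
  ext i j
  simp [vecMulVec_apply]

lemma of_one_mul_of_one [NonAssocSemiring R] :
    (of fun _ _ => 1 : Matrix ι ι R) * of (fun _ _ => 1) = (Fintype.card ι : R) • of fun _ _ => 1 := by
  ext i j
  simp [mul_apply]

lemma trace_transpose_mul_self {m : Type*} [Fintype m] [CommSemiring R] (A : Matrix m ι R) :
    trace (Aᵀ * A) = ∑ i, ∑ j, A i j ^ 2 := by
  rw [trace_mul_comm]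
  simp [trace, mul_apply, sq]

lemma trace_transpose_mul_self_mul_of_one {m : Type*} [Fintype m] [CommSemiring R]
    (A : Matrix m ι R) :
    trace (Aᵀ * A * of fun _ _ => 1) = ∑ i, (∑ j, A i j) ^ 2 := by
  rw [Matrix.mul_assoc, trace_mul_comm, of_one_eq_vecMulVec, mul_vecMulVec, vecMulVec_mul,
    vecMul_transpose, trace_vecMulVec]
  simp [dotProduct, mulVec, sq]

lemma trace_transpose_mul_self_mul_diagonal_conj {m : Type*} [Fintype m] [DecidableEq ι]
    [CommSemiring R] (A : Matrix m ι R) (d : ι → R) (M : Matrix ι ι R) :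
    trace (Aᵀ * A * (diagonal d * M * diagonal d)) =
      trace ((A * diagonal d)ᵀ * (A * diagonal d) * M) := by
  rw [transpose_mul, diagonal_transpose, ← Matrix.mul_assoc, trace_mul_comm]
  simp only [Matrix.mul_assoc]

variable [DecidableEq ι] {K : Type*} [Field K]

lemma inv_diagonal_of_ne_zero {d : ι → K} (hd : ∀ i, d i ≠ 0) :
    (diagonal d)⁻¹ = diagonal fun i => (d i)⁻¹ :=
  inv_eq_left_inv <| by simp [diagonal_mul_diagonal, hd]

lemma inv_smul_one_add_smul_of_one {a b : K} (ha : a ≠ 0) (hab : a + Fintype.card ι * b ≠ 0) :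
    (a • 1 + b • of fun _ _ => 1 : Matrix ι ι K)⁻¹ =
      a⁻¹ • (1 - (b / (a + Fintype.card ι * b)) • of fun _ _ => 1) := by
  refine inv_eq_right_inv ?_
  simp only [mul_sub, add_mul, smul_mul_smul_comm, Matrix.one_mul, Matrix.mul_one,
    of_one_mul_of_one, smul_smul, smul_sub]
  -- the coefficient of `J` is `b/a - (b/a) (a + qb)/(a + qb)`
  linear_combination (norm := module)
    mul_inv_cancel₀ ha • (1 : Matrix ι ι K) +
      ((-(b / a)) * div_self hab) • (of fun _ _ => 1 : Matrix ι ι K)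

lemma det_smul_one_add_smul_of_one {a b : K} (ha : a ≠ 0) :
    (a • 1 + b • of fun _ _ => 1 : Matrix ι ι K).det =
      a ^ Fintype.card ι * (1 + Fintype.card ι * b / a) := by
  have : (a • 1 + b • of fun _ _ => 1 : Matrix ι ι K) = a • (1 + vecMulVec ((b / a) • 1) 1) := by
    rw [of_one_eq_vecMulVec, smul_add, ← smul_vecMulVec, ← smul_vecMulVec, smul_smul,
      mul_div_cancel₀ _ ha]
  rw [this, det_smul, vecMulVec_eq Unit, det_one_add_replicateCol_mul_replicateRow]
  simp [dotProduct, mul_div_assoc]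

lemma det_equicorrelation {θ : K} (hθ : θ ≠ 1) :
    ((1 - θ) • 1 + θ • of fun _ _ => 1 : Matrix ι ι K).det =
      (1 - θ) ^ Fintype.card ι * (1 + (Fintype.card ι - 1) * θ) / (1 - θ) := by
  have h : 1 - θ ≠ 0 := sub_ne_zero.2 hθ.symm
  rw [det_smul_one_add_smul_of_one h]
  field_simp
  ring

end Matrix

lemma det_equicorrelation_pos {ι : Type*} [Fintype ι] [DecidableEq ι] {θ : ℝ} (hθ : θ < 1)
    (hθ' : 0 < 1 + (Fintype.card ι - 1) * θ) :
    0 < ((1 - θ) • 1 + θ • of fun _ _ => 1 : Matrix ι ι ℝ).det := by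
  have h : 0 < 1 - θ := sub_pos.2 hθ
  rw [det_equicorrelation hθ.ne]
  positivity

open Real in
lemma Real.log_det_equicorrelation {ι : Type*} [Fintype ι] [DecidableEq ι] {θ : ℝ} (hθ : θ < 1)
    (hθ' : 0 < 1 + (Fintype.card ι - 1) * θ) :
    log ((1 - θ) • 1 + θ • of fun _ _ => 1 : Matrix ι ι ℝ).det =
      (Fintype.card ι - 1) * log (1 - θ) + log (1 + (Fintype.card ι - 1) * θ) := by
  have h : 0 < 1 - θ := sub_pos.2 hθ
  rw [det_equicorrelation hθ.ne, log_div (by positivity) h.ne', log_mul (by positivity) hθ'.ne',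
    log_pow]
  ring

open Real in
lemma Real.log_det_diagonal_mul_mul_diagonal {ι : Type*} [Fintype ι] [DecidableEq ι]
    {η : ι → ℝ} (hη : ∀ i, η i ≠ 0) {M : Matrix ι ι ℝ} (hM : M.det ≠ 0) :
    log (diagonal η * M * diagonal η).det = 2 * ∑ i, log (η i) + log M.det := by
  have hprod : ∏ i, η i ≠ 0 := Finset.prod_ne_zero_iff.2 fun i _ => hη i
  rw [det_mul, det_mul, det_diagonal, log_mul (mul_ne_zero hprod hM) hprod, log_mul hprod hM,
    log_prod fun i _ => hη i]
  ring

theorem neg_loglik_general_compound_symmetry_general (n p q : ℕ)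
    (Y : Matrix (Fin n) (Fin q) ℝ) (X : Matrix (Fin n) (Fin p) ℝ)
    (B : Matrix (Fin p) (Fin q) ℝ) (θ : ℝ)
    (hθ0 : 0 ≤ θ) (hθ1 : θ < 1) (η : Fin q → ℝ) (hη : ∀ i, 0 < η i) :
    let S : Matrix (Fin q) (Fin q) ℝ :=
      Matrix.diagonal η *
        ((1 - θ) • 1 + θ • Matrix.of (fun _ _ => (1 : ℝ))) *
        Matrix.diagonal η;
    let O : Matrix (Fin q) (Fin q) ℝ := S⁻¹;
    let R : Matrix (Fin n) (Fin q) ℝ := Y - X * B;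
    let Rs : Matrix (Fin n) (Fin q) ℝ := R * Matrix.diagonal (fun i => (η i)⁻¹);
    Matrix.trace ((1 / (n : ℝ)) • (Rᵀ * R) * O) - Real.log O.det
      = (1 / ((n : ℝ) * (1 - θ))) * (∑ i, ∑ j, (Rs i j) ^ 2)
        - (θ / ((n : ℝ) * (1 - θ) * (1 - θ + (q : ℝ) * θ)))
            * (∑ i, (∑ j, Rs i j) ^ 2)
        + ((q : ℝ) - 1) * Real.log (1 - θ) + Real.log (1 + ((q : ℝ) - 1) * θ)
        + 2 * (∑ i, Real.log (η i)) := by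
  intro S O R Rs
  set C : Matrix (Fin q) (Fin q) ℝ := (1 - θ) • 1 + θ • of fun _ _ => 1
  have hθ : 0 < 1 - θ := sub_pos.2 hθ1
  have hqθ : 0 < 1 - θ + q * θ := add_pos_of_pos_of_nonneg hθ (by positivity)
  have hqθ' : 0 < 1 + ((Fintype.card (Fin q) : ℝ) - 1) * θ := by rw [Fintype.card_fin]; linarith
  have hCinv : C⁻¹ = (1 - θ)⁻¹ • (1 - (θ / (1 - θ + q * θ)) • of fun _ _ => 1) := by
    rw [inv_smul_one_add_smul_of_one hθ.ne' (by simpa using hqθ.ne'), Fintype.card_fin]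
  have hO : O = diagonal (fun i => (η i)⁻¹) * C⁻¹ * diagonal (fun i => (η i)⁻¹) := by
    simp only [O, S, C, Matrix.mul_inv_rev, inv_diagonal_of_ne_zero fun i => (hη i).ne',
      Matrix.mul_assoc]
  have htrace : trace ((1 / (n : ℝ)) • (Rᵀ * R) * O) = 1 / n * ((1 - θ)⁻¹ *
      (∑ i, ∑ j, Rs i j ^ 2 - θ / (1 - θ + q * θ) * ∑ i, (∑ j, Rs i j) ^ 2)) := by
    rw [smul_mul, trace_smul, hO, trace_transpose_mul_self_mul_diagonal_conj, hCinv,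
      Matrix.mul_smul, trace_smul, mul_sub, Matrix.mul_one, Matrix.mul_smul, trace_sub, trace_smul,
      trace_transpose_mul_self, trace_transpose_mul_self_mul_of_one, smul_eq_mul, smul_eq_mul,
      smul_eq_mul]
  have hlogdet : Real.log O.det = -(2 * ∑ i, Real.log (η i) + Real.log C.det) := by
    rw [det_nonsing_inv, Ring.inverse_eq_inv', Real.log_inv,
      Real.log_det_diagonal_mul_mul_diagonal (fun i => (hη i).ne')
        (det_equicorrelation_pos hθ1 hqθ').ne']
  rw [htrace, hlogdet, Real.log_det_equicorrelation hθ1 hqθ', Fintype.card_fin]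
  simp only [div_eq_mul_inv, mul_inv]
  ring

/-- The negative Gaussian log-likelihood with generalized compound symmetry
precision matrix `Ω = Σ⁻¹`, `Σ = diag(η)C diag(η)`, equals the explicit expression
in terms of the rescaled residuals. -/
theorem neg_loglik_general_compound_symmetry (n p q : ℕ)
    (hn : 1 ≤ n) (hp : 1 ≤ p) (hq : 1 ≤ q)
    (Y : Matrix (Fin n) (Fin q) ℝ) (X : Matrix (Fin n) (Fin p) ℝ)
    (B : Matrix (Fin p) (Fin q) ℝ) (θ : ℝ)
    (hθ0 : 0 ≤ θ) (hθ1 : θ < 1) (η : Fin q → ℝ) (hη : ∀ i, 0 < η i) :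
    let S : Matrix (Fin q) (Fin q) ℝ :=
      Matrix.diagonal η *
        ((1 - θ) • 1 + θ • Matrix.of (fun _ _ => (1 : ℝ))) *
        Matrix.diagonal η;
    let O : Matrix (Fin q) (Fin q) ℝ := S⁻¹;
    let R : Matrix (Fin n) (Fin q) ℝ := Y - X * B;
    let Rs : Matrix (Fin n) (Fin q) ℝ := R * Matrix.diagonal (fun i => (η i)⁻¹);
    Matrix.trace ((1 / (n : ℝ)) • (Rᵀ * R) * O) - Real.log O.det
      = (1 / ((n : ℝ) * (1 - θ))) * (∑ i, ∑ j, (Rs i j) ^ 2)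
        - (θ / ((n : ℝ) * (1 - θ) * (1 - θ + (q : ℝ) * θ)))
            * (∑ i, (∑ j, Rs i j) ^ 2)
        + ((q : ℝ) - 1) * Real.log (1 - θ) + Real.log (1 + ((q : ℝ) - 1) * θ)
        + 2 * (∑ i, Real.log (η i)) :=
  neg_loglik_general_compound_symmetry_general n p q Y X B θ hθ0 hθ1 η hη
end

section
/- Let q ≥ 2 be an integer and M₁, M₂ ≥ 0 with q·M₁ ≥ M₂. Define α̂ = (q·M₁ − M₂)/(q(q−1)), γ̂ = max{α̂, M₂/q}, η̂² = ((q−1)·α̂ + γ̂)/q, and δ̂ = M₁/q. Then q·|δ̂ − η̂²| ≤ |M₂/q − α̂|, and |M₂/q − α̂| = |M₂ − M₁|/(q−1); consequently |δ̂ − η̂²| ≤ |M₂ − M₁|/(q(q−1)). -/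
/-!
Since `(q - 1) α̂ = M₁ - M₂ / q`, the gap is `δ̂ - η̂² = (M₂ / q - γ̂) / q`, and replacing `α̂` by
`γ̂ = max α̂ (M₂ / q)` can only bring it closer to `M₂ / q`; finally `M₂ / q - α̂ = (M₂ - M₁) / (q - 1)`
is a direct computation.
-/

section Field

variable {K : Type*} [Field K] {q : K}

lemma sub_one_mul_div_mul_sub_one (hq : q ≠ 0) (hq₁ : q - 1 ≠ 0) (a b : K) :
    (q - 1) * ((q * a - b) / (q * (q - 1))) = a - b / q := by
  field_simp

lemma div_sub_div_mul_sub_one (hq : q ≠ 0) (hq₁ : q - 1 ≠ 0) (a b : K) :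
    b / q - (q * a - b) / (q * (q - 1)) = (b - a) / (q - 1) := by
  field_simp
  ring

end Field

lemma abs_sub_max_le_abs_sub {α : Type*} [AddCommGroup α] [LinearOrder α] [IsOrderedAddMonoid α]
    (a m : α) : |m - max a m| ≤ |m - a| := by
  simpa only [max_self, abs_sub_comm m] using abs_max_sub_max_le_abs a m m

section LinearOrderedField

variable {K : Type*} [Field K] [LinearOrder K] [IsStrictOrderedRing K] {q : K}

lemma mul_abs_div_sub_div_max_le (hq : 0 < q) {M α : K} (m : K) (hα : (q - 1) * α = M - m) :
    q * |M / q - ((q - 1) * α + max α m) / q| ≤ |m - α| := by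
  have hgap : M / q - ((q - 1) * α + max α m) / q = (m - max α m) / q := by
    rw [hα]
    ring
  rw [hgap, abs_div, abs_of_pos hq, mul_div_cancel₀ _ hq.ne']
  exact abs_sub_max_le_abs_sub α m

end LinearOrderedField

theorem eta_delta_gap_bound_general (q : ℕ) (hq : 2 ≤ q) (M₁ M₂ : ℝ) :
    let αh : ℝ := ((q : ℝ) * M₁ - M₂) / ((q : ℝ) * ((q : ℝ) - 1));
    let γh : ℝ := max αh (M₂ / (q : ℝ));
    let ηh2 : ℝ := (((q : ℝ) - 1) * αh + γh) / (q : ℝ);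
    let δh : ℝ := M₁ / (q : ℝ);
    (q : ℝ) * |δh - ηh2| ≤ |M₂ / (q : ℝ) - αh| ∧
    |M₂ / (q : ℝ) - αh| = |M₂ - M₁| / ((q : ℝ) - 1) ∧
    |δh - ηh2| ≤ |M₂ - M₁| / ((q : ℝ) * ((q : ℝ) - 1)) := by
  intro αh γh ηh2 δh
  have hq₀ : (0 : ℝ) < q := by positivity
  have hq₁ : (0 : ℝ) < q - 1 := by
    have : (2 : ℝ) ≤ q := by exact_mod_cast hq
    linarith
  have hdiff : (q : ℝ) * |δh - ηh2| ≤ |M₂ / q - αh| :=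
    mul_abs_div_sub_div_max_le hq₀ _ (sub_one_mul_div_mul_sub_one hq₀.ne' hq₁.ne' M₁ M₂)
  have hgap : |M₂ / q - αh| = |M₂ - M₁| / ((q : ℝ) - 1) := by
    rw [div_sub_div_mul_sub_one hq₀.ne' hq₁.ne', abs_div, abs_of_pos hq₁]
  refine ⟨hdiff, hgap, ?_⟩
  rw [hgap, ← le_div_iff₀' hq₀, div_div, mul_comm] at hdiff
  exact hdiff

/-- Bounds on the gap between the recovered variance estimate `η̂²` and the naive
variance estimate `δ̂`: `q|δ̂ − η̂²| ≤ |M₂/q − α̂|`, `|M₂/q − α̂| = |M₂−M₁|/(q−1)`,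
hence `|δ̂ − η̂²| ≤ |M₂−M₁|/(q(q−1))`. -/
theorem eta_delta_gap_bound (q : ℕ) (hq : 2 ≤ q) (M₁ M₂ : ℝ)
    (h1 : 0 ≤ M₁) (h2 : 0 ≤ M₂) (h : M₂ ≤ (q : ℝ) * M₁) :
    let αh : ℝ := ((q : ℝ) * M₁ - M₂) / ((q : ℝ) * ((q : ℝ) - 1));
    let γh : ℝ := max αh (M₂ / (q : ℝ));
    let ηh2 : ℝ := (((q : ℝ) - 1) * αh + γh) / (q : ℝ);
    let δh : ℝ := M₁ / (q : ℝ);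
    (q : ℝ) * |δh - ηh2| ≤ |M₂ / (q : ℝ) - αh| ∧
    |M₂ / (q : ℝ) - αh| = |M₂ - M₁| / ((q : ℝ) - 1) ∧
    |δh - ηh2| ≤ |M₂ - M₁| / ((q : ℝ) * ((q : ℝ) - 1)) :=
  eta_delta_gap_bound_general q hq M₁ M₂
end

section
/- Let q ≥ 2 be an integer, η*² > 0 and θ* ∈ [0,1), and let Σ* = η*²((1−θ*)·I_q + θ*·1_q 1_qᵀ). Let (E_i)_{i≥1} be a sequence of independent, identically distributed random vectors in ℝ^q with mean zero, covariance matrix Σ*, and 𝔼‖E₁‖² < ∞. For each n define M₁ⁿ = (1/n)∑_{i=1}^n ‖E_i‖², M₂ⁿ = (1/n)∑_{i=1}^n (1_qᵀ E_i)², α̂ₙ = (q·M₁ⁿ − M₂ⁿ)/(q(q−1)), γ̂ₙ = max{α̂ₙ, M₂ⁿ/q}, η̂ₙ² = ((q−1)·α̂ₙ + γ̂ₙ)/q, and θ̂ₙ = (γ̂ₙ − α̂ₙ)/(γ̂ₙ + (q−1)·α̂ₙ). Then almost surely, as n → ∞, α̂ₙ → η*²(1−θ*), M₂ⁿ/q →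 η*²(1+(q−1)θ*), η̂ₙ² → η*², and θ̂ₙ → θ*. -/
open MeasureTheory Filter ProbabilityTheory Finset Topology

/-! By the strong law of large numbers `M₁ⁿ` and `M₂ⁿ` converge almost surely to
`𝔼‖E₁‖² = tr Σ* = qη*²` and `𝔼(1ᵀE₁)² = 1ᵀΣ*1 = qη*²(1 + (q-1)θ*)`. The estimators are
continuous functions of `(M₁ⁿ, M₂ⁿ)` near this limit, and at the limit `α̂ ≤ M₂/q` because
`θ* ≥ 0`, so the maximum defining `γ̂` is inactive and inverting the reparametrization
`α = η²(1-θ)`, `γ = η²(1+(q-1)θ)` recovers `(η*², θ*)`. -/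

def compoundSymmetry (ι : Type*) [DecidableEq ι] (η2 θ : ℝ) : Matrix ι ι ℝ :=
  η2 • ((1 - θ) • 1 + θ • Matrix.of fun _ _ => 1)

section CompoundSymmetry

variable {ι : Type*} [Fintype ι] [DecidableEq ι] (η2 θ : ℝ)

theorem trace_compoundSymmetry :
    (compoundSymmetry ι η2 θ).trace = Fintype.card ι * η2 := by
  simp only [Matrix.trace, compoundSymmetry, Matrix.smul_of, smul_add, Matrix.diag_apply,
    Matrix.add_apply, Matrix.smul_apply, Matrix.one_apply_eq, smul_eq_mul, mul_one, Matrix.of_apply,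
    Pi.smul_apply, sum_const, card_univ, nsmul_eq_mul]
  ring

theorem sum_sum_compoundSymmetry :
    ∑ j, ∑ k, compoundSymmetry ι η2 θ j k
      = Fintype.card ι * η2 * (1 + (Fintype.card ι - 1) * θ) := by
  simp only [compoundSymmetry, Matrix.smul_of, Matrix.smul_apply, Matrix.add_apply,
    Matrix.one_apply, smul_eq_mul, mul_ite, mul_one, mul_zero, Matrix.of_apply, Pi.smul_apply,
    ← mul_sum, sum_add_distrib, sum_ite_eq, mem_univ, if_true, sum_const, card_univ, nsmul_eq_mul]
  ring

end CompoundSymmetry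

section SecondMoments

variable {Ω ι : Type*} [MeasurableSpace Ω] {μ : Measure Ω} [Fintype ι] {X : Ω → ι → ℝ}

theorem integrable_mul_apply_of_integrable_sum_sq (hX : AEMeasurable X μ)
    (hL2 : Integrable (fun ω => ∑ j, X ω j ^ 2) μ) (j k : ι) :
    Integrable (fun ω => X ω j * X ω k) μ := by
  refine (hL2.const_mul 2).mono' (by fun_prop) (Eventually.of_forall fun ω => ?_)
  have hj := single_le_sum (fun l _ => sq_nonneg (X ω l)) (mem_univ j)
  have hk := single_le_sum (fun l _ => sq_nonneg (X ω l)) (mem_univ k)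
  rw [Real.norm_eq_abs, abs_mul]
  nlinarith [two_mul_le_add_sq |X ω j| |X ω k|, sq_abs (X ω j), sq_abs (X ω k)]

theorem integrable_sq_sum_of_integrable_sum_sq (hX : AEMeasurable X μ)
    (hL2 : Integrable (fun ω => ∑ j, X ω j ^ 2) μ) :
    Integrable (fun ω => (∑ j, X ω j) ^ 2) μ := by
  simp only [sq, sum_mul_sum]
  exact integrable_finsetSum _ fun j _ => integrable_finsetSum _ fun k _ =>
    integrable_mul_apply_of_integrable_sum_sq hX hL2 j k

theorem integral_sum_sq_eq_trace (hX : AEMeasurable X μ)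
    (hL2 : Integrable (fun ω => ∑ j, X ω j ^ 2) μ) {A : Matrix ι ι ℝ}
    (hA : ∀ j k, ∫ ω, X ω j * X ω k ∂μ = A j k) :
    ∫ ω, ∑ j, X ω j ^ 2 ∂μ = A.trace := by
  simp only [sq]
  rw [integral_finsetSum _ fun j _ => integrable_mul_apply_of_integrable_sum_sq hX hL2 j j]
  simp [hA, Matrix.trace]

theorem integral_sq_sum_eq_sum_sum (hX : AEMeasurable X μ)
    (hL2 : Integrable (fun ω => ∑ j, X ω j ^ 2) μ) {A : Matrix ι ι ℝ}
    (hA : ∀ j k, ∫ ω, X ω j * X ω k ∂μ = A j k) :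
    ∫ ω, (∑ j, X ω j) ^ 2 ∂μ = ∑ j, ∑ k, A j k := by
  have hint := integrable_mul_apply_of_integrable_sum_sq hX hL2
  simp only [sq, sum_mul_sum]
  rw [integral_finsetSum _ fun j _ => integrable_finsetSum _ fun k _ => hint j k]
  simp only [integral_finsetSum _ fun k _ => hint _ k, hA]

end SecondMoments

theorem ae_tendsto_average_comp {Ω S : Type*} [MeasurableSpace Ω] {μ : Measure Ω}
    [MeasurableSpace S] {X : ℕ → Ω → S} (hindep : iIndepFun X μ)
    (hident : ∀ i, IdentDistrib (X i) (X 0) μ μ) {f : S → ℝ} (hf : Measurable f)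
    (hint : Integrable (fun ω => f (X 0 ω)) μ) :
    ∀ᵐ ω ∂μ, Tendsto (fun n : ℕ => (1 / (n : ℝ)) * ∑ i ∈ range n, f (X i ω)) atTop
      (𝓝 (∫ ω, f (X 0 ω) ∂μ)) := by
  filter_upwards [strong_law_ae_real (fun i ω => f (X i ω)) hint
    (fun i j hij => (hindep.indepFun hij).comp hf hf) (fun i => (hident i).comp hf)] with ω h
  simpa only [one_div_mul_eq_div] using h

section Reparametrization

variable {q η2 θ : ℝ}

theorem tendsto_alphaHat (hq : q ≠ 0) (hq1 : q - 1 ≠ 0) {m₁ m₂ : ℕ → ℝ}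
    (h₁ : Tendsto m₁ atTop (𝓝 (q * η2)))
    (h₂ : Tendsto m₂ atTop (𝓝 (q * η2 * (1 + (q - 1) * θ)))) :
    Tendsto (fun n => (q * m₁ n - m₂ n) / (q * (q - 1))) atTop (𝓝 (η2 * (1 - θ))) := by
  convert ((h₁.const_mul q).sub h₂).div_const (q * (q - 1)) using 2
  field_simp
  ring

theorem variance_eq_of_reparam (hq : q ≠ 0) :
    ((q - 1) * (η2 * (1 - θ)) + η2 * (1 + (q - 1) * θ)) / q = η2 := by
  field_simp
  ring

theorem correlation_eq_of_reparam (hq : q ≠ 0) (hη : η2 ≠ 0) :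
    (η2 * (1 + (q - 1) * θ) - η2 * (1 - θ)) / (η2 * (1 + (q - 1) * θ) + (q - 1) * (η2 * (1 - θ)))
      = θ := by
  rw [div_eq_iff (by ring_nf; exact mul_ne_zero hη hq)]
  ring

end Reparametrization

theorem tendsto_variance_correlation_of_max {q α γ : ℝ} {a g : ℕ → ℝ}
    (ha : Tendsto a atTop (𝓝 α)) (hg : Tendsto g atTop (𝓝 γ)) (hαγ : α ≤ γ)
    (hden : γ + (q - 1) * α ≠ 0) :
    Tendsto (fun n => ((q - 1) * a n + max (a n) (g n)) / q) atTop
        (𝓝 (((q - 1) * α + γ) / q)) ∧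
      Tendsto (fun n => (max (a n) (g n) - a n) / (max (a n) (g n) + (q - 1) * a n)) atTop
        (𝓝 ((γ - α) / (γ + (q - 1) * α))) := by
  have hmax : Tendsto (fun n => max (a n) (g n)) atTop (𝓝 γ) := by
    simpa only [max_eq_right hαγ] using ha.max hg
  exact ⟨((ha.const_mul _).add hmax).div_const q,
    (hmax.sub ha).div (hmax.add (ha.const_mul _)) hden⟩

theorem strong_consistency_compound_symmetry_general
    {W : Type*} [MeasurableSpace W] (μ : Measure W)
    (q : ℕ) (hq : 2 ≤ q) (η2 θ : ℝ) (hη : 0 < η2) (hθ0 : 0 ≤ θ)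
    (E : ℕ → W → Fin q → ℝ)
    (hindep : ProbabilityTheory.iIndepFun E μ)
    (hident : ∀ i, ProbabilityTheory.IdentDistrib (E i) (E 0) μ μ)
    (hcov : ∀ j k, ∫ ω, E 0 ω j * E 0 ω k ∂μ
      = ((η2 • ((1 - θ) • 1 + θ • Matrix.of (fun _ _ => (1 : ℝ)))
          : Matrix (Fin q) (Fin q) ℝ) j k))
    (hL2 : Integrable (fun ω => ∑ j, (E 0 ω j) ^ 2) μ) :
    let M₁ : ℕ → W → ℝ := fun n ω =>
      (1 / (n : ℝ)) * ∑ i ∈ Finset.range n, ∑ j, (E i ω j) ^ 2;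
    let M₂ : ℕ → W → ℝ := fun n ω =>
      (1 / (n : ℝ)) * ∑ i ∈ Finset.range n, (∑ j, E i ω j) ^ 2;
    let αh : ℕ → W → ℝ := fun n ω =>
      ((q : ℝ) * M₁ n ω - M₂ n ω) / ((q : ℝ) * ((q : ℝ) - 1));
    let γh : ℕ → W → ℝ := fun n ω => max (αh n ω) (M₂ n ω / (q : ℝ));
    let ηh2 : ℕ → W → ℝ := fun n ω => (((q : ℝ) - 1) * αh n ω + γh n ω) / (q : ℝ);
    let θh : ℕ → W → ℝ := fun n ω =>
      (γh n ω - αh n ω) / (γh n ω + ((q : ℝ) - 1) * αh n ω);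
    ∀ᵐ ω ∂μ,
      Tendsto (fun n => αh n ω) atTop (nhds (η2 * (1 - θ))) ∧
      Tendsto (fun n => M₂ n ω / (q : ℝ)) atTop (nhds (η2 * (1 + ((q : ℝ) - 1) * θ))) ∧
      Tendsto (fun n => ηh2 n ω) atTop (nhds η2) ∧
      Tendsto (fun n => θh n ω) atTop (nhds θ) := by
  intro M₁ M₂ αh γh ηh2 θh
  have hq' : (2 : ℝ) ≤ q := by exact_mod_cast hq
  have hX : AEMeasurable (E 0) μ := (hident 0).aemeasurable_snd
  have hcov' : ∀ j k, ∫ ω, E 0 ω j * E 0 ω k ∂μ = compoundSymmetry (Fin q) η2 θ j k := hcov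
  have hM₁ := ae_tendsto_average_comp hindep hident (f := fun x => ∑ j, x j ^ 2)
    (by fun_prop) hL2
  have hM₂ := ae_tendsto_average_comp hindep hident (f := fun x => (∑ j, x j) ^ 2)
    (by fun_prop) (integrable_sq_sum_of_integrable_sum_sq hX hL2)
  rw [integral_sum_sq_eq_trace hX hL2 hcov', trace_compoundSymmetry, Fintype.card_fin] at hM₁
  rw [integral_sq_sum_eq_sum_sum hX hL2 hcov', sum_sum_compoundSymmetry, Fintype.card_fin] at hM₂
  filter_upwards [hM₁, hM₂] with ω h₁ h₂
  have hα := tendsto_alphaHat (by positivity) (by linarith) h₁ h₂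
  have hγ : Tendsto (fun n => M₂ n ω / q) atTop (𝓝 (η2 * (1 + (q - 1) * θ))) := by
    convert h₂.div_const (q : ℝ) using 2
    field_simp
  obtain ⟨hηh, hθh⟩ := tendsto_variance_correlation_of_max hα hγ
    (by nlinarith [mul_nonneg hη.le hθ0]) (by nlinarith [mul_nonneg hη.le hθ0])
  refine ⟨hα, hγ, ?_, ?_⟩
  · rwa [variance_eq_of_reparam (by positivity)] at hηh
  · rwa [correlation_eq_of_reparam (by positivity) hη.ne'] at hθh

/-- Strong consistency of the closed-form compound symmetry estimators: for an iid
sequence of mean-zero errors with covariance `Σ* = η*²((1−θ*)I + θ*11ᵀ)` and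
finite second moment, almost surely `α̂ₙ → η*²(1−θ*)`, `M₂ⁿ/q → η*²(1+(q−1)θ*)`,
`η̂ₙ² → η*²`, and `θ̂ₙ → θ*`. -/
theorem strong_consistency_compound_symmetry
    {W : Type*} [MeasurableSpace W] (μ : Measure W) [IsProbabilityMeasure μ]
    (q : ℕ) (hq : 2 ≤ q) (η2 θ : ℝ) (hη : 0 < η2) (hθ0 : 0 ≤ θ) (hθ1 : θ < 1)
    (E : ℕ → W → Fin q → ℝ)
    (hmeas : ∀ i, Measurable (E i))
    (hindep : ProbabilityTheory.iIndepFun E μ)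
    (hident : ∀ i, ProbabilityTheory.IdentDistrib (E i) (E 0) μ μ)
    (hmean : ∀ j, ∫ ω, E 0 ω j ∂μ = 0)
    (hcov : ∀ j k, ∫ ω, E 0 ω j * E 0 ω k ∂μ
      = ((η2 • ((1 - θ) • 1 + θ • Matrix.of (fun _ _ => (1 : ℝ)))
          : Matrix (Fin q) (Fin q) ℝ) j k))
    (hL2 : Integrable (fun ω => ∑ j, (E 0 ω j) ^ 2) μ) :
    let M₁ : ℕ → W → ℝ := fun n ω =>
      (1 / (n : ℝ)) * ∑ i ∈ Finset.range n, ∑ j, (E i ω j) ^ 2;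
    let M₂ : ℕ → W → ℝ := fun n ω =>
      (1 / (n : ℝ)) * ∑ i ∈ Finset.range n, (∑ j, E i ω j) ^ 2;
    let αh : ℕ → W → ℝ := fun n ω =>
      ((q : ℝ) * M₁ n ω - M₂ n ω) / ((q : ℝ) * ((q : ℝ) - 1));
    let γh : ℕ → W → ℝ := fun n ω => max (αh n ω) (M₂ n ω / (q : ℝ));
    let ηh2 : ℕ → W → ℝ := fun n ω => (((q : ℝ) - 1) * αh n ω + γh n ω) / (q : ℝ);
    let θh : ℕ → W → ℝ := fun n ω =>
      (γh n ω - αh n ω) / (γh n ω + ((q : ℝ) - 1) * αh n ω);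
    ∀ᵐ ω ∂μ,
      Tendsto (fun n => αh n ω) atTop (nhds (η2 * (1 - θ))) ∧
      Tendsto (fun n => M₂ n ω / (q : ℝ)) atTop (nhds (η2 * (1 + ((q : ℝ) - 1) * θ))) ∧
      Tendsto (fun n => ηh2 n ω) atTop (nhds η2) ∧
      Tendsto (fun n => θh n ω) atTop (nhds θ) :=
  strong_consistency_compound_symmetry_general μ q hq η2 θ hη hθ0 E hindep hident hcov hL2
end
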